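/- Let H be a k-uniform hypergraph and let d ≥ 2 be an integer. The toric ideal I_H is generated in degree at most d if and only if for every primitive balanced edge set 𝓔 of H with |𝓔_blue| = |𝓔_red| = n > d, one of the following two conditions holds: (i) there exists a proper splitting set of 𝓔; or (ii) there exist an integer N ≥ 1, balanced edge sets 𝓦_0 = 𝓔, 𝓦_1, …, 𝓦_N, and for each 1 ≤ i ≤ N a multiset S_i that is a blue splitting set of 𝓦_{i−1} of size less than n with decomposition (Γ1_i, S_i, Γ2_i), and a multiset R_i that is a red splitting set of 𝓦_{i−1} of size less than n with decomposition (Υ1_i, R_i, Υ2_i), such that 𝓦_i = ((Γ2_i)_blue, (Υ1_i)_red) for each 1 ≤ i ≤ N, and either S_N ∩ R_N ≠ ∅ or there exists a proper splitting set of 𝓦_N. -/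

import Mathlib

open MvPolynomial

namespace ToricHG

variable (K : Type) [Field K] (V : Type) [Fintype V] [DecidableEq V]

/-- The edges of a hypergraph with edge set `E`, as a type. -/
abbrev Edge (E : Finset (Finset V)) : Type := {e : Finset V // e ∈ E}

/-- The monomial map `t_e ↦ ∏_{v ∈ e} x_v`. -/
noncomputable def phiH (E : Finset (Finset V)) :
    MvPolynomial (Edge V E) K →ₐ[K] MvPolynomial V K :=
  aeval (fun e : Edge V E => ∏ v ∈ e.1, (X v : MvPolynomial V K))

/-- The toric ideal of a hypergraph. -/
noncomputable def toricIdeal (E : Finset (Finset V)) :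
    Ideal (MvPolynomial (Edge V E) K) :=
  RingHom.ker (phiH K V E).toRingHom

/-- The number of edges of the multiset `M` containing `v`, counted with multiplicity. -/
def degIn (E : Finset (Finset V)) (v : V) (M : Multiset (Edge V E)) : ℕ :=
  Multiset.card (M.filter (fun e => v ∈ e.1))

/-- The bicolored edge multiset `(B, R)` is balanced. -/
def Balanced (E : Finset (Finset V)) (B R : Multiset (Edge V E)) : Prop :=
  ∀ v : V, degIn V E v B = degIn V E v R

/-- The binomial arising from the bicolored edge multiset `(B, R)`. -/
noncomputable def binom (E : Finset (Finset V)) (B R : Multiset (Edge V E)) :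
    MvPolynomial (Edge V E) K :=
  (B.map fun e => (X e : MvPolynomial (Edge V E) K)).prod -
    (R.map fun e => (X e : MvPolynomial (Edge V E) K)).prod

/-- The balanced edge set `(B, R)` is primitive. -/
def Primitive (E : Finset (Finset V)) (B R : Multiset (Edge V E)) : Prop :=
  Balanced V E B R ∧
    ¬ ∃ B' R' : Multiset (Edge V E),
        ¬(B' = 0 ∧ R' = 0) ∧ Balanced V E B' R' ∧ B' < B ∧ R' < R

/-- The balanced edge set `(Fb, Fr)` is reducible with separator `S` and
decomposition `((G1b, G1r), S, (G2b, G2r))`. -/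
def ReducibleWith (E : Finset (Finset V))
    (Fb Fr S G1b G1r G2b G2r : Multiset (Edge V E)) : Prop :=
  Balanced V E Fb Fr ∧ S ≠ 0 ∧ S.toFinset ⊆ (Fb + Fr).toFinset ∧
    Balanced V E G1b G1r ∧ Balanced V E G2b G2r ∧
    ¬(G1b = Fb ∧ G1r = Fr) ∧ ¬(G2b = Fb ∧ G2r = Fr) ∧
    S = G1r ∩ G2b ∧ Fb = G1b + G2b ∧ Fr = G1r + G2r

/-- `S` is a splitting set of the balanced edge set `(Eb, Er)` with
decomposition `((G1b, G1r), S, (G2b, G2r))`, i.e. `(Eb, Er) + S` is reducible with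
separator `S` and this decomposition. -/
def SplittingSetWith (E : Finset (Finset V))
    (Eb Er S G1b G1r G2b G2r : Multiset (Edge V E)) : Prop :=
  ReducibleWith V E (Eb + S) (Er + S) S G1b G1r G2b G2r

/-- `S` is a proper splitting set of the balanced edge set `(Eb, Er)`. -/
def ProperSplittingSet (E : Finset (Finset V))
    (Eb Er S : Multiset (Edge V E)) : Prop :=
  ∃ G1b G1r G2b G2r : Multiset (Edge V E),
    SplittingSetWith V E Eb Er S G1b G1r G2b G2r ∧ S < G1r ∧ S < G2b

/-- A binomial: the difference of two distinct monic monomials. -/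
def IsBinomial (E : Finset (Finset V)) (f : MvPolynomial (Edge V E) K) : Prop :=
  ∃ a b : (Edge V E) →₀ ℕ, a ≠ b ∧ f = monomial a 1 - monomial b 1

/-- `f` is an indispensable binomial of the toric ideal of the hypergraph. -/
def Indispensable (E : Finset (Finset V)) (f : MvPolynomial (Edge V E) K) : Prop :=
  ∀ G : Set (MvPolynomial (Edge V E) K),
    (∀ g ∈ G, IsBinomial K V E g) → Ideal.span G = toricIdeal K V E →
      f ∈ G ∨ -f ∈ G

/-- The Graver basis of the toric ideal of the hypergraph: the binomials arising from
primitive balanced edge sets `(B, R)` with `B ≠ R`. -/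
def GraverSet (E : Finset (Finset V)) : Set (MvPolynomial (Edge V E) K) :=
  {f | ∃ B R : Multiset (Edge V E), Primitive V E B R ∧ B ≠ R ∧ f = binom K V E B R}

/-- The ideal `I` is generated in degree at most `d`. -/
def GenInDegLE {σ : Type} (I : Ideal (MvPolynomial σ K)) (d : ℕ) : Prop :=
  I = Ideal.span {f | f ∈ I ∧ f.totalDegree ≤ d}

end ToricHG


/-!
Sufficiency: by strong induction on `n`, the binomial `t^B - t^R` of every balanced edge set of
size `n` lies in the ideal `J` generated by the elements of `I_H` of degree at most `d`
(uniformity makes the size of a balanced edge set a function of its vertex degrees). If `(B, R)`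
is not primitive, or has a proper splitting set `S`, then `t^B - t^R` is a combination of
binomials of two balanced edge sets of size less than `n`. A blue splitting set of `W` with
decomposition `(Γ1, S, Γ2)` changes `t^(W_blue)` into `t^(Γ2_blue)` modulo `t^(Γ1_blue) - t^S`,
and dually for red ones, so along condition (ii) `t^B - t^R` is congruent modulo `J` to the
binomial of `W_N`; this one splits properly, or a common edge of `S_N` and `R_N` factors out of
it. As `I_H` is spanned by the binomials of balanced edge sets, `J = I_H`.

Necessity: if `t^B - t^R ∈ J`, summing coefficients over the exponents reachable from `B` by
moves (exchanges of balanced parts of size at most `d`) is a linear form vanishing on `J`, so `R`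
is reachable from `B`. The moves of such a walk are blue splitting sets, which gives (ii).
-/

theorem Finset.sum_smul_eq_zero_of_fiberwise {ι κ R M : Type*} [Semiring R] [AddCommMonoid M]
    [Module R M] [DecidableEq κ] {s : Finset ι} (π : ι → κ) {f : ι → R} {c : ι → M}
    (hc : ∀ i ∈ s, ∀ j ∈ s, π i = π j → c i = c j)
    (hf : ∀ y, ∑ i ∈ s with π i = y, f i = 0) : ∑ i ∈ s, f i • c i = 0 := by
  rw [← Finset.sum_fiberwise_of_maps_to fun i hi => Finset.mem_image_of_mem π hi]
  refine Finset.sum_eq_zero fun y hy => ?_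
  obtain ⟨i₀, hi₀, rfl⟩ := Finset.mem_image.1 hy
  have hconst : ∀ i ∈ s.filter (π · = π i₀), f i • c i = f i • c i₀ := fun i hi =>
    congrArg _ (hc i (Finset.mem_filter.1 hi).1 i₀ hi₀ (Finset.mem_filter.1 hi).2)
  rw [Finset.sum_congr rfl hconst, ← Finset.sum_smul, hf, zero_smul]

theorem Relation.ReflTransGen.exists_seq {α : Type*} {r : α → α → Prop} (hr : ∀ x, r x x)
    {a b : α} (h : Relation.ReflTransGen r a b) :
    ∃ (ℓ : ℕ) (f : ℕ → α), f 0 = a ∧ (∀ i, ℓ ≤ i → f i = b) ∧ ∀ i, r (f i) (f (i + 1)) := by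
  induction h using Relation.ReflTransGen.head_induction_on with
  | refl => exact ⟨0, fun _ => b, rfl, fun _ _ => rfl, fun _ => hr b⟩
  | @head a c hac _ ih =>
    obtain ⟨ℓ, f, hf₀, hfℓ, hf⟩ := ih
    refine ⟨ℓ + 1, fun i => if i = 0 then a else f (i - 1), rfl, fun i hi => ?_, fun i => ?_⟩
    · simpa [show i ≠ 0 by omega] using hfℓ (i - 1) (by omega)
    · rcases i with _ | i
      · simpa [hf₀] using hac
      · simpa using hf i

theorem Multiset.prod_map_X_eq_monomial {R σ : Type*} [CommSemiring R] [DecidableEq σ]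
    (M : Multiset σ) : (M.map fun i => (X i : MvPolynomial σ R)).prod =
      monomial (Multiset.toFinsupp M) 1 := by
  induction M using Multiset.induction with
  | empty => simp
  | cons i M ih =>
    rw [Multiset.map_cons, Multiset.prod_cons, ih, ← Multiset.singleton_add,
      Multiset.toFinsupp_add, Multiset.toFinsupp_singleton, X, monomial_mul, one_mul]

namespace ToricHG

noncomputable def coeffSumOn {R σ : Type*} [CommSemiring R] (P : Set (σ →₀ ℕ)) :
    MvPolynomial σ R →ₗ[R] R :=
  (basisMonomials σ R).constr R (P.indicator 1)

theorem coeffSumOn_monomial {R σ : Type*} [CommSemiring R] (P : Set (σ →₀ ℕ)) (u : σ →₀ ℕ)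
    (c : R) : coeffSumOn P (monomial u c) = c * P.indicator 1 u := by
  have hu : monomial u c = c • basisMonomials σ R u := by
    rw [coe_basisMonomials, smul_monomial, smul_eq_mul, mul_one]
  rw [hu, map_smul, coeffSumOn, Module.Basis.constr_basis, smul_eq_mul]

variable {K : Type} [Field K] {V : Type} {E : Finset (Finset V)}

theorem mem_toricIdeal_iff {g : MvPolynomial (Edge V E) K} :
    g ∈ toricIdeal K V E ↔ phiH K V E g = 0 :=
  RingHom.mem_ker

theorem totalDegree_binom_le {B R : Multiset (Edge V E)} {d : ℕ} (hB : Multiset.card B ≤ d)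
    (hR : Multiset.card R ≤ d) : (binom K V E B R).totalDegree ≤ d := by
  have hprod : ∀ M : Multiset (Edge V E), Multiset.card M ≤ d →
      (M.map fun e => (X e : MvPolynomial (Edge V E) K)).prod.totalDegree ≤ d := fun M hM =>
    (totalDegree_multiset_prod _).trans (by simpa [Function.comp_def, totalDegree_X] using hM)
  exact (totalDegree_sub _ _).trans (max_le (hprod B hB) (hprod R hR))

theorem binom_add_add (C A A' : Multiset (Edge V E)) :
    binom K V E (C + A) (C + A') = (C.map fun e => X e).prod * binom K V E A A' := by
  simp only [binom, Multiset.map_add, Multiset.prod_add, mul_sub]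

theorem binom_add_binom (A B C : Multiset (Edge V E)) :
    binom K V E A B + binom K V E B C = binom K V E A C :=
  sub_add_sub_cancel _ _ _

variable [DecidableEq V]

theorem binom_eq_monomial (B R : Multiset (Edge V E)) :
    binom K V E B R = monomial (Multiset.toFinsupp B) 1 - monomial (Multiset.toFinsupp R) 1 := by
  rw [binom, Multiset.prod_map_X_eq_monomial, Multiset.prod_map_X_eq_monomial]

theorem binom_eq_of_add_eq {B R S G1b G1r G2b G2r : Multiset (Edge V E)}
    (hS₁ : S ≤ G1r) (hS₂ : S ≤ G2b) (hB : B + S = G1b + G2b) (hR : R + S = G1r + G2r) :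
    binom K V E B R = ((G2b - S).map fun e => X e).prod * binom K V E G1b G1r +
      ((G1r - S).map fun e => X e).prod * binom K V E G2b G2r := by
  have hB' : G2b - S + G1b = B := by
    rw [tsub_add_eq_add_tsub hS₂, add_comm, ← hB, add_tsub_cancel_right]
  have hR' : G1r - S + G2r = R := by
    rw [tsub_add_eq_add_tsub hS₁, ← hR, add_tsub_cancel_right]
  have hmid : G2b - S + G1r = G1r - S + G2b := by
    rw [tsub_add_eq_add_tsub hS₂, tsub_add_eq_add_tsub hS₁, add_comm]
  rw [← binom_add_add, ← binom_add_add, hB', hR', hmid, binom_add_binom]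

section Balanced

theorem degIn_add (v : V) (M N : Multiset (Edge V E)) :
    degIn V E v (M + N) = degIn V E v M + degIn V E v N := by
  simp [degIn, Multiset.filter_add]

theorem degIn_sub (v : V) {M N : Multiset (Edge V E)} (h : N ≤ M) :
    degIn V E v (M - N) = degIn V E v M - degIn V E v N := by
  rw [degIn, Multiset.filter_sub, Multiset.card_sub (Multiset.filter_le_filter _ h)]
  rfl

theorem degIn_cons (v : V) (e : Edge V E) (M : Multiset (Edge V E)) :
    degIn V E v (e ::ₘ M) = (if v ∈ e.1 then 1 else 0) + degIn V E v M := by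
  by_cases h : v ∈ e.1 <;> simp [degIn, h, add_comm]

theorem Balanced.refl (B : Multiset (Edge V E)) : Balanced V E B B := fun _ => rfl

theorem Balanced.symm {B R : Multiset (Edge V E)} (h : Balanced V E B R) : Balanced V E R B :=
  fun v => (h v).symm

theorem Balanced.trans {A B C : Multiset (Edge V E)} (h₁ : Balanced V E A B)
    (h₂ : Balanced V E B C) : Balanced V E A C :=
  fun v => (h₁ v).trans (h₂ v)

theorem Balanced.add {A B C D : Multiset (Edge V E)} (h₁ : Balanced V E A B)
    (h₂ : Balanced V E C D) : Balanced V E (A + C) (B + D) := fun v => by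
  rw [degIn_add, degIn_add, h₁ v, h₂ v]

theorem Balanced.sub {A B C D : Multiset (Edge V E)} (h₁ : Balanced V E A B)
    (h₂ : Balanced V E C D) (hCA : C ≤ A) (hDB : D ≤ B) : Balanced V E (A - C) (B - D) :=
  fun v => by rw [degIn_sub v hCA, degIn_sub v hDB, h₁ v, h₂ v]

theorem eq_zero_of_balanced_zero (hE : ∀ e ∈ E, e.Nonempty) {R : Multiset (Edge V E)}
    (h : Balanced V E 0 R) : R = 0 := by
  refine Multiset.eq_zero_of_forall_notMem fun e he => ?_
  obtain ⟨v, hv⟩ := hE e.1 e.2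
  have hpos : 0 < degIn V E v R :=
    Multiset.card_pos_iff_exists_mem.2 ⟨e, Multiset.mem_filter.2 ⟨he, hv⟩⟩
  exact hpos.ne (h v)

variable [Fintype V]

theorem sum_degIn {k : ℕ} (hunif : ∀ e ∈ E, e.card = k) (M : Multiset (Edge V E)) :
    ∑ v : V, degIn V E v M = k * Multiset.card M := by
  induction M using Multiset.induction with
  | empty => simp [degIn]
  | cons e M ih =>
    simp only [degIn_cons, Finset.sum_add_distrib, ih, Finset.sum_boole,
      Finset.filter_mem_eq_inter, Finset.univ_inter, Nat.cast_id, hunif e.1 e.2,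
      Multiset.card_cons]
    ring

theorem Balanced.card_eq (hE : ∀ e ∈ E, e.Nonempty) {k : ℕ} (hunif : ∀ e ∈ E, e.card = k)
    {B R : Multiset (Edge V E)} (h : Balanced V E B R) : Multiset.card B = Multiset.card R := by
  rcases Multiset.empty_or_exists_mem B with rfl | ⟨e, -⟩
  · rw [eq_zero_of_balanced_zero hE h]
  · have hk : 0 < k := hunif e.1 e.2 ▸ Finset.card_pos.2 (hE e.1 e.2)
    refine Nat.eq_of_mul_eq_mul_left hk ?_
    rw [← sum_degIn hunif, ← sum_degIn hunif]
    exact Finset.sum_congr rfl fun v _ => h v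

end Balanced

section ToricIdeal

variable [Fintype V]

noncomputable def vertexDegrees (M : Multiset (Edge V E)) : V →₀ ℕ :=
  Finsupp.equivFunOnFinite.symm fun v => degIn V E v M

theorem balanced_iff_vertexDegrees_eq {B R : Multiset (Edge V E)} :
    Balanced V E B R ↔ vertexDegrees B = vertexDegrees R := by
  simp [Balanced, vertexDegrees, funext_iff]

theorem phiH_prod_map_X (M : Multiset (Edge V E)) :
    phiH K V E (M.map fun e => X e).prod = monomial (vertexDegrees M) 1 := by
  induction M using Multiset.induction with
  | empty =>
    have h0 : vertexDegrees (0 : Multiset (Edge V E)) = 0 := by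
      ext v; simp [vertexDegrees, degIn]
    simp [h0]
  | cons e M ih =>
    have hdeg : vertexDegrees (e ::ₘ M) = (∑ v ∈ e.1, Finsupp.single v 1) + vertexDegrees M := by
      ext v
      simp [vertexDegrees, degIn_cons, Finsupp.single_apply]
    rw [Multiset.map_cons, Multiset.prod_cons, map_mul, ih, hdeg, ← one_mul (1 : K),
      ← monomial_mul, monomial_sum_one]
    simp [phiH]; rfl

theorem phiH_monomial (u : Edge V E →₀ ℕ) (c : K) :
    phiH K V E (monomial u c) = monomial (vertexDegrees (Finsupp.toMultiset u)) c := by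
  rw [← mul_one c, ← smul_eq_mul, ← smul_monomial, ← smul_monomial, map_smul,
    ← Finsupp.toMultiset_toFinsupp u, ← Multiset.prod_map_X_eq_monomial, phiH_prod_map_X,
    Multiset.toFinsupp_toMultiset]

theorem binom_mem_toricIdeal {B R : Multiset (Edge V E)} (h : Balanced V E B R) :
    binom K V E B R ∈ toricIdeal K V E := by
  rw [mem_toricIdeal_iff, binom, map_sub, phiH_prod_map_X, phiH_prod_map_X,
    balanced_iff_vertexDegrees_eq.1 h, sub_self]

theorem sum_coeff_fiber_eq_zero {g : MvPolynomial (Edge V E) K} (hg : g ∈ toricIdeal K V E)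
    (y : V →₀ ℕ) :
    ∑ w ∈ g.support with vertexDegrees (Finsupp.toMultiset w) = y, coeff w g = 0 := by
  have h := congrArg (coeff y) (mem_toricIdeal_iff.1 hg)
  conv_lhs at h => rw [as_sum g, map_sum]
  simpa [phiH_monomial, coeff_sum, coeff_monomial, Finset.sum_filter] using h

theorem toricIdeal_le_of_binom_mem {J : Ideal (MvPolynomial (Edge V E) K)}
    (hJ : ∀ B R, Balanced V E B R → binom K V E B R ∈ J) : toricIdeal K V E ≤ J := by
  intro g hg
  set π := fun w : Edge V E →₀ ℕ => vertexDegrees (Finsupp.toMultiset w)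
  -- `ρ w` is a fixed exponent in the fibre of `w`; the coefficients of `g` sum to zero on each
  -- fibre, so the terms `coeff w g • t^(ρ w)` cancel.
  set ρ := fun w => Function.invFunOn π g.support (π w)
  have hρ : ∀ w ∈ g.support, π (ρ w) = π w := fun w hw => Function.invFunOn_eq ⟨w, hw, rfl⟩
  have hrep : ∑ w ∈ g.support, coeff w g • monomial (ρ w) (1 : K) = 0 :=
    Finset.sum_smul_eq_zero_of_fiberwise π (fun i _ j _ h => by simp only [ρ, h])
      (sum_coeff_fiber_eq_zero hg)
  have hg_eq : g = ∑ w ∈ g.support,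
      coeff w g • binom K V E (Finsupp.toMultiset w) (Finsupp.toMultiset (ρ w)) := by
    simp only [binom_eq_monomial, Finsupp.toMultiset_toFinsupp, smul_sub,
      Finset.sum_sub_distrib, hrep, sub_zero]
    simpa only [smul_monomial, smul_eq_mul, mul_one] using as_sum g
  rw [hg_eq]
  exact J.sum_mem fun w hw => Submodule.smul_of_tower_mem _ _
    (hJ _ _ (balanced_iff_vertexDegrees_eq.2 (hρ w hw).symm))

end ToricIdeal

section SplittingSets

theorem ReducibleWith.swap {Fb Fr S G1b G1r G2b G2r : Multiset (Edge V E)}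
    (h : ReducibleWith V E Fb Fr S G1b G1r G2b G2r) :
    ReducibleWith V E Fr Fb S G2r G2b G1r G1b := by
  obtain ⟨hF, hS, hsupp, h₁, h₂, hne₁, hne₂, hsep, hb, hr⟩ := h
  exact ⟨hF.symm, hS, by rwa [add_comm], h₂.symm, h₁.symm, fun h => hne₂ ⟨h.2, h.1⟩,
    fun h => hne₁ ⟨h.2, h.1⟩, hsep.trans (Multiset.inter_comm _ _), by rwa [add_comm],
    by rwa [add_comm]⟩

/-- Exchanging the colours turns a red splitting set into a blue one. -/
theorem SplittingSetWith.swap {Wb Wr S G1b G1r G2b G2r : Multiset (Edge V E)}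
    (h : SplittingSetWith V E Wb Wr S G1b G1r G2b G2r) :
    SplittingSetWith V E Wr Wb S G2r G2b G1r G1b :=
  ReducibleWith.swap h

theorem SplittingSetWith.le_left {Wb Wr S G1b G1r G2b G2r : Multiset (Edge V E)}
    (h : SplittingSetWith V E Wb Wr S G1b G1r G2b G2r) : S ≤ G1r := by
  obtain ⟨-, -, -, -, -, -, -, hsep, -, -⟩ := h
  exact hsep ▸ Multiset.inter_le_left

theorem SplittingSetWith.le_right {Wb Wr S G1b G1r G2b G2r : Multiset (Edge V E)}
    (h : SplittingSetWith V E Wb Wr S G1b G1r G2b G2r) : S ≤ G2b := by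
  obtain ⟨-, -, -, -, -, -, -, hsep, -, -⟩ := h
  exact hsep ▸ Multiset.inter_le_right

theorem SplittingSetWith.eq_of_blue {Wb Wr S G1b G2b G2r : Multiset (Edge V E)}
    (h : SplittingSetWith V E Wb Wr S G1b S G2b G2r) : G2r = Wr := by
  obtain ⟨-, -, -, -, -, -, -, -, -, hr⟩ := h
  exact add_left_cancel (hr.symm.trans (add_comm _ _))

theorem SplittingSetWith.balanced_of_blue {Wb Wr S G1b G2b G2r : Multiset (Edge V E)}
    (h : SplittingSetWith V E Wb Wr S G1b S G2b G2r) : Balanced V E G2b Wr := by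
  rw [← h.eq_of_blue]
  exact h.2.2.2.2.1

/-- Condition (ii) of the criterion for a balanced edge set `(B, R)` of size `n`. -/
def SplittingSequence (n : ℕ) (B R : Multiset (Edge V E)) : Prop :=
  ∃ N : ℕ, 1 ≤ N ∧
    ∃ Wb Wr S T G1b G1r G2b G2r U1b U1r U2b U2r : ℕ → Multiset (Edge V E),
      Wb 0 = B ∧ Wr 0 = R ∧
      (∀ i : ℕ, 1 ≤ i → i ≤ N →
        (SplittingSetWith V E (Wb (i - 1)) (Wr (i - 1)) (S i)
            (G1b i) (G1r i) (G2b i) (G2r i) ∧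
          G1r i = S i ∧ Multiset.card (S i) < n) ∧
        (SplittingSetWith V E (Wb (i - 1)) (Wr (i - 1)) (T i)
            (U1b i) (U1r i) (U2b i) (U2r i) ∧
          U2b i = T i ∧ Multiset.card (T i) < n) ∧
        Wb i = G2b i ∧ Wr i = U1r i) ∧
      (S N ∩ T N ≠ 0 ∨
        ∃ P : Multiset (Edge V E), ProperSplittingSet V E (Wb N) (Wr N) P)

end SplittingSets

section Sufficiency

variable {J : Ideal (MvPolynomial (Edge V E) K)}

theorem binom_mem_of_add_eq {B R S G1b G1r G2b G2r : Multiset (Edge V E)}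
    (hS₁ : S ≤ G1r) (hS₂ : S ≤ G2b) (hB : B + S = G1b + G2b) (hR : R + S = G1r + G2r)
    (h₁ : binom K V E G1b G1r ∈ J) (h₂ : binom K V E G2b G2r ∈ J) : binom K V E B R ∈ J := by
  rw [binom_eq_of_add_eq hS₁ hS₂ hB hR]
  exact add_mem (J.mul_mem_left _ h₁) (J.mul_mem_left _ h₂)

theorem binom_mem_of_common_edge {B R : Multiset (Edge V E)} {e : Edge V E}
    (hbal : Balanced V E B R) (hB : e ∈ B) (hR : e ∈ R)
    (hJ : ∀ B' R', Balanced V E B' R' → Multiset.card B' < Multiset.card B →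
      binom K V E B' R' ∈ J) : binom K V E B R ∈ J := by
  have hbal' : Balanced V E (B.erase e) (R.erase e) := by
    simpa only [Multiset.sub_singleton] using
      hbal.sub (.refl {e}) (Multiset.singleton_le.2 hB) (Multiset.singleton_le.2 hR)
  have hcard : Multiset.card (B.erase e) < Multiset.card B := Multiset.card_erase_lt_of_mem hB
  rw [← Multiset.cons_erase hB, ← Multiset.cons_erase hR, ← Multiset.singleton_add,
    ← Multiset.singleton_add, binom_add_add]
  exact J.mul_mem_left _ (hJ _ _ hbal' hcard)

theorem binom_mem_of_not_primitive (hE : ∀ e ∈ E, e.Nonempty) {B R : Multiset (Edge V E)}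
    (hbal : Balanced V E B R) (hprim : ¬Primitive V E B R)
    (hJ : ∀ B' R', Balanced V E B' R' → Multiset.card B' < Multiset.card B →
      binom K V E B' R' ∈ J) : binom K V E B R ∈ J := by
  obtain ⟨B', R', hne, hbal', hB, hR⟩ := not_not.1 fun h => hprim ⟨hbal, h⟩
  have hB' : B' ≠ 0 := fun h0 => hne ⟨h0, eq_zero_of_balanced_zero hE (h0 ▸ hbal')⟩
  refine binom_mem_of_add_eq (Multiset.zero_le _) (Multiset.zero_le _)
    (by rw [add_zero, add_tsub_cancel_of_le hB.le]) (by rw [add_zero, add_tsub_cancel_of_le hR.le])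
    (hJ _ _ hbal' (Multiset.card_lt_card hB)) (hJ _ _ (hbal.sub hbal' hB.le hR.le) ?_)
  rw [Multiset.card_sub hB.le]
  have := Multiset.card_pos.2 hB'
  have := Multiset.card_le_card hB.le
  omega

variable [Fintype V]

theorem binom_mem_of_properSplittingSet (hE : ∀ e ∈ E, e.Nonempty) {k : ℕ}
    (hunif : ∀ e ∈ E, e.card = k) {B R S : Multiset (Edge V E)}
    (hJ : ∀ B' R', Balanced V E B' R' → Multiset.card B' < Multiset.card B →
      binom K V E B' R' ∈ J)
    (h : ProperSplittingSet V E B R S) : binom K V E B R ∈ J := by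
  obtain ⟨G1b, G1r, G2b, G2r, ⟨-, -, -, h₁, h₂, -, -, -, hB, hR⟩, hlt₁, hlt₂⟩ := h
  have hcard := congrArg Multiset.card hB
  have := h₁.card_eq hE hunif
  have := Multiset.card_lt_card hlt₁
  have := Multiset.card_lt_card hlt₂
  simp only [Multiset.card_add] at hcard
  exact binom_mem_of_add_eq hlt₁.le hlt₂.le hB hR (hJ _ _ h₁ (by omega)) (hJ _ _ h₂ (by omega))

/-- `t^Wb - t^G2b = t^(G2b - S) (t^G1b - t^S)`, and `|G1b| = |S| < n`. -/
theorem SplittingSetWith.binom_sub_mem_of_blue (hE : ∀ e ∈ E, e.Nonempty) {k : ℕ}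
    (hunif : ∀ e ∈ E, e.card = k) {Wb Wr S G1b G2b G2r : Multiset (Edge V E)} {n : ℕ}
    (h : SplittingSetWith V E Wb Wr S G1b S G2b G2r) (hS : Multiset.card S < n)
    (hJ : ∀ B R, Balanced V E B R → Multiset.card B < n → binom K V E B R ∈ J) :
    binom K V E Wb Wr - binom K V E G2b Wr ∈ J := by
  have hG2r := h.eq_of_blue
  obtain ⟨-, -, -, h₁, -, -, -, hsep, hb, hr⟩ := h
  have hid := binom_eq_of_add_eq (K := K) le_rfl (hsep ▸ Multiset.inter_le_right) hb hr
  rw [tsub_self, Multiset.map_zero, Multiset.prod_zero, one_mul, hG2r] at hid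
  rw [hid, add_sub_cancel_right]
  exact J.mul_mem_left _ (hJ _ _ h₁ (h₁.card_eq hE hunif ▸ hS))

theorem SplittingSetWith.binom_sub_mem_of_red (hE : ∀ e ∈ E, e.Nonempty) {k : ℕ}
    (hunif : ∀ e ∈ E, e.card = k) {Wb Wr T U1b U1r U2r : Multiset (Edge V E)} {n : ℕ}
    (h : SplittingSetWith V E Wb Wr T U1b U1r T U2r) (hT : Multiset.card T < n)
    (hJ : ∀ B R, Balanced V E B R → Multiset.card B < n → binom K V E B R ∈ J) :
    binom K V E Wb Wr - binom K V E Wb U1r ∈ J := by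
  convert J.neg_mem (h.swap.binom_sub_mem_of_blue hE hunif hT hJ) using 1
  simp only [binom]
  ring

theorem binom_sub_mem_of_splitting_pair (hE : ∀ e ∈ E, e.Nonempty) {k : ℕ}
    (hunif : ∀ e ∈ E, e.card = k) {Wb Wr Wb' Wr' S T G1b G2r U1b U2r : Multiset (Edge V E)}
    {n : ℕ} (hblue : SplittingSetWith V E Wb Wr S G1b S Wb' G2r) (hS : Multiset.card S < n)
    (hred : SplittingSetWith V E Wb Wr T U1b Wr' T U2r) (hT : Multiset.card T < n)
    (hJ : ∀ B R, Balanced V E B R → Multiset.card B < n → binom K V E B R ∈ J) :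
    binom K V E Wb Wr - binom K V E Wb' Wr' ∈ J := by
  convert add_mem (hblue.binom_sub_mem_of_blue hE hunif hS hJ)
    (hred.binom_sub_mem_of_red hE hunif hT hJ) using 1
  simp only [binom]
  ring

theorem binom_mem_of_splittingSequence (hE : ∀ e ∈ E, e.Nonempty) {k : ℕ}
    (hunif : ∀ e ∈ E, e.card = k) {B R : Multiset (Edge V E)} {n : ℕ}
    (hbal : Balanced V E B R) (hB : Multiset.card B = n)
    (hJ : ∀ B' R', Balanced V E B' R' → Multiset.card B' < n → binom K V E B' R' ∈ J)
    (h : SplittingSequence n B R) : binom K V E B R ∈ J := by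
  obtain ⟨N, hN, Wb, Wr, S, T, G1b, G1r, G2b, G2r, U1b, U1r, U2b, U2r, hWb₀, hWr₀, hstep,
    hlast⟩ := h
  have hwalk : ∀ i ≤ N, Balanced V E B (Wb i) ∧ Balanced V E (Wb i) (Wr i) ∧
      binom K V E B R - binom K V E (Wb i) (Wr i) ∈ J := by
    intro i hi
    induction i with
    | zero => rw [hWb₀, hWr₀, sub_self]; exact ⟨.refl B, hbal, J.zero_mem⟩
    | succ i ih =>
      obtain ⟨hBW, hW, hmem⟩ := ih (by omega)
      obtain ⟨⟨hblue, hG1r, hS⟩, ⟨hred, hU2b, hT⟩, hWb, hWr⟩ := hstep (i + 1) (by omega) hi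
      rw [Nat.add_sub_cancel, hG1r] at hblue
      rw [Nat.add_sub_cancel, hU2b] at hred
      have hblue_bal := hblue.balanced_of_blue
      have hred_bal := hred.swap.balanced_of_blue
      rw [hWb, hWr]
      refine ⟨hBW.trans (hW.trans hblue_bal.symm), hblue_bal.trans (hW.symm.trans hred_bal.symm),
        ?_⟩
      rw [← sub_add_sub_cancel _ (binom K V E (Wb i) (Wr i))]
      exact add_mem hmem (binom_sub_mem_of_splitting_pair hE hunif hblue hS hred hT hJ)
  obtain ⟨hBW, hW, hmem⟩ := hwalk N le_rfl
  have hJN : ∀ B' R', Balanced V E B' R' → Multiset.card B' < Multiset.card (Wb N) →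
      binom K V E B' R' ∈ J := by
    rwa [← hBW.card_eq hE hunif, hB]
  have hlastJ : binom K V E (Wb N) (Wr N) ∈ J := by
    rcases hlast with hST | ⟨P, hP⟩
    · obtain ⟨⟨hblue, -, -⟩, ⟨hred, -, -⟩, hWb, hWr⟩ := hstep N hN le_rfl
      obtain ⟨e, he⟩ := Multiset.exists_mem_of_ne_zero hST
      rw [Multiset.mem_inter] at he
      exact binom_mem_of_common_edge hW (hWb ▸ Multiset.mem_of_le hblue.le_right he.1)
        (hWr ▸ Multiset.mem_of_le hred.le_left he.2) hJN
    · exact binom_mem_of_properSplittingSet hE hunif hJN hP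
  simpa using add_mem hmem hlastJ

theorem binom_mem_span_of_criterion (hE : ∀ e ∈ E, e.Nonempty) {k d : ℕ}
    (hunif : ∀ e ∈ E, e.card = k)
    (H : ∀ (B R : Multiset (Edge V E)) (n : ℕ), Primitive V E B R → Multiset.card B = n →
      Multiset.card R = n → d < n →
      (∃ S, ProperSplittingSet V E B R S) ∨ SplittingSequence n B R)
    {B R : Multiset (Edge V E)} (hbal : Balanced V E B R) :
    binom K V E B R ∈ Ideal.span {f | f ∈ toricIdeal K V E ∧ f.totalDegree ≤ d} := by
  induction hn : Multiset.card B using Nat.strong_induction_on generalizing B R with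
  | _ n ih =>
  have hJ : ∀ B' R', Balanced V E B' R' → Multiset.card B' < n →
      binom K V E B' R' ∈ Ideal.span {f | f ∈ toricIdeal K V E ∧ f.totalDegree ≤ d} :=
    fun B' R' h hlt => ih _ hlt h rfl
  have hR : Multiset.card R = n := hn ▸ (hbal.card_eq hE hunif).symm
  by_cases hnd : n ≤ d
  · exact Ideal.subset_span
      ⟨binom_mem_toricIdeal hbal, totalDegree_binom_le (hn ▸ hnd) (hR ▸ hnd)⟩
  by_cases hprim : Primitive V E B R
  · rcases H B R n hprim hn hR (by omega) with ⟨S, hS⟩ | hseq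
    · exact binom_mem_of_properSplittingSet hE hunif (hn ▸ hJ) hS
    · exact binom_mem_of_splittingSequence hE hunif hbal hn hJ hseq
  · exact binom_mem_of_not_primitive hE hbal hprim (hn ▸ hJ)

end Sufficiency

section Necessity

def IsMove (d : ℕ) (X Y : Multiset (Edge V E)) : Prop :=
  ∃ C A A', Balanced V E A A' ∧ Multiset.card A ≤ d ∧ Multiset.card A' ≤ d ∧
    X = C + A ∧ Y = C + A'

theorem IsMove.refl (d : ℕ) (X : Multiset (Edge V E)) : IsMove d X X :=
  ⟨X, 0, 0, .refl 0, Nat.zero_le d, Nat.zero_le d, (add_zero X).symm, (add_zero X).symm⟩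

theorem IsMove.symm {d : ℕ} {X Y : Multiset (Edge V E)} (h : IsMove d X Y) : IsMove d Y X := by
  obtain ⟨C, A, A', hA, hcard, hcard', rfl, rfl⟩ := h
  exact ⟨C, A', A, hA.symm, hcard', hcard, rfl, rfl⟩

theorem IsMove.balanced {d : ℕ} {X Y : Multiset (Edge V E)} (h : IsMove d X Y) :
    Balanced V E X Y := by
  obtain ⟨C, A, A', hA, -, -, rfl, rfl⟩ := h
  exact (Balanced.refl C).add hA

theorem IsMove.exists_ne_zero (hE : ∀ e ∈ E, e.Nonempty) {d : ℕ} (hd : 1 ≤ d)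
    {X Y : Multiset (Edge V E)} (hY : Y ≠ 0) (h : IsMove d X Y) :
    ∃ C A A', Balanced V E A A' ∧ A' ≠ 0 ∧ Multiset.card A' ≤ d ∧ X = C + A ∧ Y = C + A' := by
  obtain ⟨C, A, A', hA, -, hcard', rfl, rfl⟩ := h
  by_cases hA' : A' = 0
  · subst hA'
    obtain rfl := eq_zero_of_balanced_zero hE hA.symm
    obtain ⟨e, he⟩ := Multiset.exists_mem_of_ne_zero hY
    have hsplit : C + 0 = C.erase e + {e} := by
      rw [add_zero, add_comm, Multiset.singleton_add, Multiset.cons_erase (by simpa using he)]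
    exact ⟨C.erase e, {e}, {e}, .refl _, Multiset.singleton_ne_zero e, by simpa using hd,
      hsplit, hsplit⟩
  · exact ⟨C, A, A', hA, hA', hcard', rfl, rfl⟩

theorem splittingSetWith_of_move {X Y X' C A A' : Multiset (Edge V E)} (hXY : Balanced V E X Y)
    (hY : Y ≠ 0) (hA : Balanced V E A A') (hA' : A' ≠ 0) (hX : X = C + A) (hX' : X' = C + A') :
    SplittingSetWith V E X Y A' A A' X' Y := by
  subst hX hX'
  have hsep : A' ∩ (C + A') = A' :=
    le_antisymm Multiset.inter_le_left (Multiset.le_inter le_rfl (Multiset.le_add_left _ _))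
  refine ⟨hXY.add (.refl A'), hA', fun e he => ?_, hA, ((Balanced.refl C).add hA.symm).trans hXY,
    fun h => hY ?_, fun h => hA' ?_, hsep.symm, by abel, add_comm _ _⟩
  · simp only [Multiset.mem_toFinset, Multiset.mem_add] at he ⊢
    exact Or.inr (Or.inr he)
  · simpa using h.2
  · simpa using h.2

theorem splittingSetWith_singleton {X Y : Multiset (Edge V E)} {e : Edge V E}
    (hXY : Balanced V E X Y) (hX : X ≠ 0) (he : e ∈ Y) :
    SplittingSetWith V E X Y {e} X Y {e} {e} := by
  have hY : Y = Y.erase e + {e} := by rw [add_comm, Multiset.singleton_add, Multiset.cons_erase he]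
  exact (splittingSetWith_of_move hXY.symm hX (.refl _) (Multiset.singleton_ne_zero e) hY hY).swap

theorem splittingSequence_of_reflTransGen (hE : ∀ e ∈ E, e.Nonempty) {d n : ℕ} (hd : 1 ≤ d)
    {B R : Multiset (Edge V E)} (hbal : Balanced V E B R) (hB : Multiset.card B = n)
    (hn : d < n) (h : Relation.ReflTransGen (IsMove d) B R) : SplittingSequence n B R := by
  obtain ⟨ℓ, f, hf₀, hfℓ, hmove⟩ := h.exists_seq (IsMove.refl d)
  have hbalf : ∀ i, Balanced V E (f i) R := by
    intro i
    induction i with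
    | zero => rwa [hf₀]
    | succ i ih => exact (hmove i).balanced.symm.trans ih
  have hR : R ≠ 0 := by
    rintro rfl
    rw [eq_zero_of_balanced_zero hE hbal.symm, Multiset.card_zero] at hB
    omega
  have hf : ∀ i, f i ≠ 0 := fun i h0 => hR (eq_zero_of_balanced_zero hE (h0 ▸ hbalf i))
  choose C A A' hA using fun i => (hmove i).exists_ne_zero hE hd (hf (i + 1))
  obtain ⟨-, hA'ℓ, -, -, hfℓ'⟩ := hA ℓ
  obtain ⟨e, he⟩ := Multiset.exists_mem_of_ne_zero hA'ℓ
  have heR : e ∈ R := by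
    rw [← hfℓ (ℓ + 1) (by omega), hfℓ']
    exact Multiset.mem_add.2 (Or.inr he)
  -- The blue side follows the walk; the red side stays at `R`, split off by an edge `e` brought
  -- in by the last move, so that `e` is common to the last pair of splitting sets.
  refine ⟨ℓ + 1, le_add_self, f, fun _ => R, fun i => A' (i - 1), fun _ => {e},
    fun i => A (i - 1), fun i => A' (i - 1), f, fun _ => R, fun i => f (i - 1), fun _ => R,
    fun _ => {e}, fun _ => {e}, hf₀, rfl, fun i hi _ => ?_, Or.inl ?_⟩
  · obtain ⟨hAA', hA', hcard, hfi, hfi'⟩ := hA (i - 1)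
    rw [Nat.sub_add_cancel hi] at hfi'
    exact ⟨⟨splittingSetWith_of_move (hbalf (i - 1)) hR hAA' hA' hfi hfi', rfl,
      hcard.trans_lt hn⟩, ⟨splittingSetWith_singleton (hbalf (i - 1)) (hf (i - 1)) heR, rfl,
      by simp; omega⟩, rfl, rfl⟩
  · exact ne_of_mem_of_not_mem' (Multiset.mem_inter.2 ⟨he, Multiset.mem_singleton_self e⟩)
      (Multiset.notMem_zero e)

variable [Fintype V]

theorem isMove_of_mem_support {g : MvPolynomial (Edge V E) K} {d : ℕ}
    (hgd : g.totalDegree ≤ d) (m : Edge V E →₀ ℕ) {w w' : Edge V E →₀ ℕ} (hw : w ∈ g.support)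
    (hw' : w' ∈ g.support)
    (h : vertexDegrees (Finsupp.toMultiset w) = vertexDegrees (Finsupp.toMultiset w')) :
    IsMove d (Finsupp.toMultiset (m + w)) (Finsupp.toMultiset (m + w')) := by
  refine ⟨Finsupp.toMultiset m, Finsupp.toMultiset w, Finsupp.toMultiset w',
    balanced_iff_vertexDegrees_eq.2 h, ?_, ?_, Finsupp.toMultiset_add _ _,
    Finsupp.toMultiset_add _ _⟩
  · exact (Finsupp.card_toMultiset w).trans_le ((le_totalDegree hw).trans hgd)
  · exact (Finsupp.card_toMultiset w').trans_le ((le_totalDegree hw').trans hgd)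

theorem coeffSumOn_monomial_mul_eq_zero {d : ℕ} {P : Set (Edge V E →₀ ℕ)}
    (hP : ∀ u v, IsMove d (Finsupp.toMultiset u) (Finsupp.toMultiset v) → u ∈ P → v ∈ P)
    {g : MvPolynomial (Edge V E) K} (hg : g ∈ toricIdeal K V E) (hgd : g.totalDegree ≤ d)
    (m : Edge V E →₀ ℕ) : coeffSumOn P (monomial m 1 * g) = 0 := by
  classical
  -- The exponents of `t^m g` in one fibre of `φ_H` differ by moves, so they lie all in `P` or
  -- all outside; and the coefficients sum to zero on each fibre.
  have hexpand : monomial m (1 : K) * g = ∑ w ∈ g.support, monomial (m + w) (coeff w g) := by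
    conv_lhs => rw [as_sum g]
    simp only [Finset.mul_sum, monomial_mul, one_mul]
  simp only [hexpand, map_sum, coeffSumOn_monomial, ← smul_eq_mul]
  refine Finset.sum_smul_eq_zero_of_fiberwise (fun w => vertexDegrees (Finsupp.toMultiset w))
    (fun w hw w' hw' h => ?_) (sum_coeff_fiber_eq_zero hg)
  have hmove := isMove_of_mem_support hgd m hw hw' h
  have hiff : m + w ∈ P ↔ m + w' ∈ P := ⟨hP _ _ hmove, hP _ _ hmove.symm⟩
  simp only [Set.indicator_apply, hiff, Pi.one_apply]

theorem coeffSumOn_eq_zero_of_mem_span {d : ℕ} {P : Set (Edge V E →₀ ℕ)}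
    (hP : ∀ u v, IsMove d (Finsupp.toMultiset u) (Finsupp.toMultiset v) → u ∈ P → v ∈ P)
    {f : MvPolynomial (Edge V E) K}
    (hf : f ∈ Ideal.span {g | g ∈ toricIdeal K V E ∧ g.totalDegree ≤ d}) :
    coeffSumOn P f = 0 := by
  suffices ∀ p, coeffSumOn P (p * f) = 0 by simpa using this 1
  induction hf using Submodule.span_induction with
  | mem g hg =>
    intro p
    have hp : p * g = ∑ m ∈ p.support, coeff m p • (monomial m 1 * g) := by
      conv_lhs => rw [as_sum p, Finset.sum_mul]
      refine Finset.sum_congr rfl fun m _ => ?_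
      rw [← smul_mul_assoc, smul_monomial, smul_eq_mul, mul_one]
    simp [hp, coeffSumOn_monomial_mul_eq_zero hP hg.1 hg.2]
  | zero => simp
  | add x y _ _ hx hy => intro p; rw [mul_add, map_add, hx, hy, add_zero]
  | smul a x _ hx => intro p; rw [smul_eq_mul, ← mul_assoc]; exact hx _

theorem reflTransGen_isMove_of_binom_mem {d : ℕ} {B R : Multiset (Edge V E)}
    (h : binom K V E B R ∈ Ideal.span {g | g ∈ toricIdeal K V E ∧ g.totalDegree ≤ d}) :
    Relation.ReflTransGen (IsMove d) B R := by
  set P : Set (Edge V E →₀ ℕ) :=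
    {u | Relation.ReflTransGen (IsMove d) B (Finsupp.toMultiset u)}
  have hP : ∀ u v, IsMove d (Finsupp.toMultiset u) (Finsupp.toMultiset v) → u ∈ P → v ∈ P :=
    fun _ _ hmove hu => hu.tail hmove
  have hB : Multiset.toFinsupp B ∈ P := by
    simp only [P, Set.mem_ofPred_eq, Multiset.toFinsupp_toMultiset, Relation.ReflTransGen.refl]
  by_contra hBR
  have hR : Multiset.toFinsupp R ∉ P := by simpa [P] using hBR
  have hzero := coeffSumOn_eq_zero_of_mem_span hP h
  rw [binom_eq_monomial, map_sub, coeffSumOn_monomial, coeffSumOn_monomial,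
    Set.indicator_of_mem hB, Set.indicator_of_notMem hR] at hzero
  simp at hzero

end Necessity

end ToricHG

namespace ToricHG

/-- For a `k`-uniform hypergraph `H` and `d ≥ 2`, the toric ideal `I_H` is
generated in degree at most `d` iff for every primitive balanced edge set `(B, R)` with
`|B| = |R| = n > d` either (i) there is a proper splitting set of `(B, R)`, or (ii) there is a
finite sequence of pairs of blue and red splitting sets of size less than `n` as in the
criterion, ending in a pair sharing an edge or in a walk with a proper splitting set. -/
theorem toricIdeal_genInDeg_iff_splitting_criterion
    (K : Type) [Field K] (V : Type) [Fintype V] [DecidableEq V]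
    (k d : ℕ) (hd : 2 ≤ d)
    (E : Finset (Finset V)) (hE : ∀ e ∈ E, e.Nonempty)
    (hunif : ∀ e ∈ E, e.card = k) :
    GenInDegLE K (toricIdeal K V E) d ↔
      ∀ (B R : Multiset (Edge V E)) (n : ℕ),
        Primitive V E B R → Multiset.card B = n → Multiset.card R = n → d < n →
        ((∃ S : Multiset (Edge V E), ProperSplittingSet V E B R S) ∨
          (∃ N : ℕ, 1 ≤ N ∧
            ∃ Wb Wr S T G1b G1r G2b G2r U1b U1r U2b U2r : ℕ → Multiset (Edge V E),
              Wb 0 = B ∧ Wr 0 = R ∧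
              (∀ i : ℕ, 1 ≤ i → i ≤ N →
                (SplittingSetWith V E (Wb (i - 1)) (Wr (i - 1)) (S i)
                    (G1b i) (G1r i) (G2b i) (G2r i) ∧
                  G1r i = S i ∧ Multiset.card (S i) < n) ∧
                (SplittingSetWith V E (Wb (i - 1)) (Wr (i - 1)) (T i)
                    (U1b i) (U1r i) (U2b i) (U2r i) ∧
                  U2b i = T i ∧ Multiset.card (T i) < n) ∧
                Wb i = G2b i ∧ Wr i = U1r i) ∧
              (S N ∩ T N ≠ 0 ∨
                ∃ P : Multiset (Edge V E), ProperSplittingSet V E (Wb N) (Wr N) P))) := by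
  constructor
  · intro hgen B R n hprim hB _ hn
    have hmem := binom_mem_toricIdeal (K := K) hprim.1
    rw [hgen] at hmem
    exact Or.inr (splittingSequence_of_reflTransGen hE (by omega) hprim.1 hB hn
      (reflTransGen_isMove_of_binom_mem hmem))
  · intro H
    refine le_antisymm (toricIdeal_le_of_binom_mem fun B R hBR => ?_)
      (Ideal.span_le.2 fun f hf => hf.1)
    exact binom_mem_span_of_criterion hE hunif H hBR

end ToricHG
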